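/- Let φ be a 3CNF formula with k clauses encoded by the network f(x) = -∑_{j=1}^k s(l_{j,1}(x)+l_{j,2}(x)+l_{j,3}(x)) with inputs x ∈ {0,1}^m. If an assignment x ∈ {0,1}^m satisfies φ, then f(x) = -k, the minimum possible value of f. -/
import Mathlib


noncomputable def ReLU (x : ℝ) : ℝ := max x 0

noncomputable def s (x : ℝ) : ℝ := ReLU x - ReLU (x - 1)

noncomputable def litEnc {m : ℕ} (L : Fin m × Bool) (x : Fin m → ℝ) : ℝ :=
  if L.2 then x L.1 else 1 - x L.1

/-- The network encoding of the 3CNF formula with clauses `C`. -/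
noncomputable def netF {m k : ℕ} (C : Fin k → Fin 3 → Fin m × Bool) (x : Fin m → ℝ) : ℝ :=
  -(∑ j : Fin k, s (litEnc (C j 0) x + litEnc (C j 1) x + litEnc (C j 2) x))

lemma s_le_one (t : ℝ) : s t ≤ 1 := by
  unfold s ReLU
  rcases le_or_gt t 0 with h | h
  · rw [max_eq_right h]
    have : (0:ℝ) ≤ max (t-1) 0 := le_max_right _ _
    linarith
  · have : t - 1 ≤ max (t-1) 0 := le_max_left _ _
    have h2 : t ≤ max t 0 := le_max_left _ _
    rw [max_eq_left h.le]
    linarith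

lemma s_eq_one {t : ℝ} (h : 1 ≤ t) : s t = 1 := by
  unfold s ReLU
  rw [max_eq_left (by linarith), max_eq_left (by linarith)]
  ring

lemma lit_nonneg {m : ℕ} (L : Fin m × Bool) (x : Fin m → ℝ)
    (hx : ∀ i, x i = 0 ∨ x i = 1) : 0 ≤ litEnc L x := by
  unfold litEnc
  rcases hx L.1 with h | h <;> split <;> simp [h]

theorem stmt_6 (m k : ℕ) (C : Fin k → Fin 3 → Fin m × Bool)
    (x : Fin m → ℝ) (hx : ∀ i, x i = 0 ∨ x i = 1)
    (hsat : ∀ j : Fin k, ∃ r : Fin 3,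
      (if (C j r).2 then x (C j r).1 = 1 else x (C j r).1 = 0)) :
    netF C x = -(k : ℝ) ∧
    ∀ y : Fin m → ℝ, (∀ i, y i = 0 ∨ y i = 1) → -(k : ℝ) ≤ netF C y := by
  constructor
  · unfold netF
    have h1 : ∀ j : Fin k,
        s (litEnc (C j 0) x + litEnc (C j 1) x + litEnc (C j 2) x) = 1 := by
      intro j
      obtain ⟨r, hr⟩ := hsat j
      have hlit : litEnc (C j r) x = 1 := by
        unfold litEnc
        split_ifs at hr ⊢ with h <;> simp [hr]
      have h0 := lit_nonneg (C j 0) x hx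
      have h1 := lit_nonneg (C j 1) x hx
      have h2 := lit_nonneg (C j 2) x hx
      apply s_eq_one
      fin_cases r <;> simp at hlit <;> linarith
    simp [h1]
  · intro y hy
    unfold netF
    have : (∑ j : Fin k, s (litEnc (C j 0) y + litEnc (C j 1) y + litEnc (C j 2) y))
        ≤ ∑ j : Fin k, (1:ℝ) := by
      apply Finset.sum_le_sum
      intro j _
      exact s_le_one _
    simp at this
    linarith
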